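/- arXiv:1712.08209 — 4 statements merged into one kernel-verified Lean document; each statement's English description precedes it below -/
import Mathlib

section
/- Suppose x : ℝ → ℝⁿ solves ẋ = f(x,u(t)), φ : ℝⁿ → ℝ^{n_ξ} satisfies the PDE ∇φ(x)ᵀ f(x,v) = Λ φ(x) + B(h(x),v) for all x and v, and ξ : ℝ → ℝ^{n_ξ} solves ξ̇ = Λ ξ + B(h(x(t)),u(t)). Then the error e(t) := ξ(t) − φ(x(t)) satisfies ė(t) = Λ e(t), and hence if Λ is diagonal with negative entries, e(t) → 0 as t → ∞. -/
/-!
Differentiating `ξ - φ ∘ x` along the trajectory, the PDE for `φ` replaces `Dφ(x) ẋ` by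
`Λ φ(x) + B(h(x), u)`, and the input terms cancel against those in `ξ̇`, leaving `ė = Λ e`.
For diagonal `Λ` this decouples into scalar equations `ėᵢ = dᵢ eᵢ`, whose solutions
`eᵢ(0) e^{dᵢ t}` decay when `dᵢ < 0`.
-/

open Filter Topology Real

theorem hasDerivAt_sub_comp_of_pde {E F : Type*} [NormedAddCommGroup E] [NormedSpace ℝ E]
    [NormedAddCommGroup F] [NormedSpace ℝ F] (A : F →ₗ[ℝ] F) {φ : E → F} {x : ℝ → E}
    {ξ : ℝ → F} {t : ℝ} {v : E} {b : F} (hφ : DifferentiableAt ℝ φ (x t))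
    (hpde : fderiv ℝ φ (x t) v = A (φ (x t)) + b) (hx : HasDerivAt x v t)
    (hξ : HasDerivAt ξ (A (ξ t) + b) t) :
    HasDerivAt (fun s => ξ s - φ (x s)) (A (ξ t - φ (x t))) t := by
  have hφx : HasDerivAt (fun s => φ (x s)) (A (φ (x t)) + b) t :=
    hpde ▸ hφ.hasFDerivAt.comp_hasDerivAt t hx
  refine (hξ.sub hφx).congr_deriv ?_
  rw [map_sub]
  abel

theorem eq_mul_exp_of_hasDerivAt_mul {g : ℝ → ℝ} {c : ℝ}
    (hg : ∀ t, HasDerivAt g (c * g t) t) (t : ℝ) : g t = g 0 * exp (c * t) := by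
  have hderiv : ∀ s, HasDerivAt (fun s => g s * exp (-c * s)) 0 s := by
    intro s
    have hexp : HasDerivAt (fun s => exp (-c * s)) (exp (-c * s) * -c) s := by
      simpa using ((hasDerivAt_id s).const_mul (-c)).exp
    refine ((hg s).mul hexp).congr_deriv ?_
    ring
  have hconst : g t * exp (-c * t) = g 0 := by
    simpa using is_const_of_deriv_eq_zero (fun s => (hderiv s).differentiableAt)
      (fun s => (hderiv s).deriv) t 0
  rw [← hconst, mul_assoc, ← exp_add]
  simp

theorem tendsto_zero_of_hasDerivAt_mul {g : ℝ → ℝ} {c : ℝ}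
    (hg : ∀ t, HasDerivAt g (c * g t) t) (hc : c < 0) : Tendsto g atTop (𝓝 0) := by
  have hexp : Tendsto (fun t => exp (c * t)) atTop (𝓝 0) :=
    tendsto_exp_atBot.comp (tendsto_id.const_mul_atTop_of_neg hc)
  simpa [← eq_mul_exp_of_hasDerivAt_mul hg] using hexp.const_mul (g 0)

theorem tendsto_zero_of_hasDerivAt_diagonal_mulVec {ι : Type*} [Fintype ι] [DecidableEq ι]
    {d : ι → ℝ} {e : ℝ → ι → ℝ} (he : ∀ t, HasDerivAt e ((Matrix.diagonal d).mulVec (e t)) t)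
    (hd : ∀ i, d i < 0) : Tendsto e atTop (𝓝 0) := by
  refine tendsto_pi_nhds.mpr fun i => tendsto_zero_of_hasDerivAt_mul (fun t => ?_) (hd i)
  simpa [Matrix.mulVec_diagonal] using hasDerivAt_pi.mp (he t) i

/-- Correctness of the Kazantzis–Kravaris–Luenberger observer (Proposition 1):
the error `e = ξ - φ ∘ x` satisfies `ė = Λ e`, and if `Λ` is diagonal with
strictly negative entries then `e(t) → 0`. -/
theorem stmt_1 {n m p nξ : ℕ}
    (f : (Fin n → ℝ) → (Fin m → ℝ) → (Fin n → ℝ))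
    (h : (Fin n → ℝ) → (Fin p → ℝ))
    (B : (Fin p → ℝ) → (Fin m → ℝ) → (Fin nξ → ℝ))
    (Λ : Matrix (Fin nξ) (Fin nξ) ℝ)
    (φ : (Fin n → ℝ) → (Fin nξ → ℝ)) (hφ : Differentiable ℝ φ)
    (hPDE : ∀ (z : Fin n → ℝ) (v : Fin m → ℝ),
      fderiv ℝ φ z (f z v) = Λ.mulVec (φ z) + B (h z) v)
    (u : ℝ → (Fin m → ℝ))
    (x : ℝ → (Fin n → ℝ)) (ξ : ℝ → (Fin nξ → ℝ))
    (hx : ∀ t : ℝ, HasDerivAt x (f (x t) (u t)) t)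
    (hξ : ∀ t : ℝ, HasDerivAt ξ (Λ.mulVec (ξ t) + B (h (x t)) (u t)) t) :
    (∀ t : ℝ, HasDerivAt (fun s => ξ s - φ (x s)) (Λ.mulVec (ξ t - φ (x t))) t) ∧
    (∀ d : Fin nξ → ℝ, Λ = Matrix.diagonal d → (∀ i, d i < 0) →
      Filter.Tendsto (fun t => ξ t - φ (x t)) Filter.atTop (nhds 0)) := by
  have he : ∀ t, HasDerivAt (fun s => ξ s - φ (x s)) (Λ.mulVec (ξ t - φ (x t))) t := fun t =>
    hasDerivAt_sub_comp_of_pde Λ.mulVecLin (hφ (x t)) (hPDE (x t) (u t)) (hx t) (hξ t)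
  refine ⟨he, fun d hΛ hd => ?_⟩
  subst hΛ
  exact tendsto_zero_of_hasDerivAt_diagonal_mulVec he hd
end

section
/- Persistency of excitation implies exponential convergence: let ψ : [0,∞) → ℝⁿ be continuous and bounded, and assume there exist δ, T > 0 with ∫_t^{t+T} ψ(s) ψ(s)ᵀ ds ⪰ δ Iₙ (as positive semidefinite matrices) for all t ≥ 0. Then for any symmetric positive definite Γ, every solution of θ̃̇ = −Γ ψ(t) ψ(t)ᵀ θ̃ converges to 0 as t → ∞. -/
/-!
With `g = ⟪ψ, θ⟫`, the Lyapunov function `V = ⟪Γ⁻¹ θ, θ⟫ / 2` satisfies `V' = -g²`. Being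
nonnegative and nonincreasing, `V` converges, so the excitation energy `∫_t^{t+T} g²` tends to `0`.
If `‖ψ‖ ≤ C`, on `[t, t + T]` the solution moves by at most `‖Γ‖ C ∫ |g| ≤ ‖Γ‖ C √(T ∫ g²)`, hence
`⟪ψ s, θ t⟫` stays close to `g s`, and persistency of excitation yields `δ ‖θ t‖² ≤ K ∫_t^{t+T} g²`.
-/

open Filter Topology Set MeasureTheory Matrix
open scoped RealInnerProductSpace

theorem sq_intervalIntegral_le_mul_intervalIntegral_sq {f : ℝ → ℝ} {a b : ℝ} (hab : a ≤ b)
    (hf : IntervalIntegrable f volume a b)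
    (hf2 : IntervalIntegrable (fun x => f x ^ 2) volume a b) :
    (∫ x in a..b, f x) ^ 2 ≤ (b - a) * ∫ x in a..b, f x ^ 2 := by
  rcases hab.eq_or_lt with rfl | hlt
  · simp
  set L := ∫ x in a..b, f x
  set c := L / (b - a)
  have hba : 0 < b - a := sub_pos.2 hlt
  have hcL : c * (b - a) = L := div_mul_cancel₀ L hba.ne'
  -- integrate `2 c f ≤ f ^ 2 + c ^ 2`, with `c` the mean value of `f`
  have key : 2 * c * L ≤ (∫ x in a..b, f x ^ 2) + c ^ 2 * (b - a) := by
    have := intervalIntegral.integral_mono_on (g := fun x => f x ^ 2 + c ^ 2) hab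
      (hf.const_mul (2 * c)) (hf2.add intervalIntegrable_const)
      fun x _ => by nlinarith [sq_nonneg (f x - c)]
    rwa [intervalIntegral.integral_const_mul,
      intervalIntegral.integral_add hf2 intervalIntegrable_const,
      intervalIntegral.integral_const, smul_eq_mul, mul_comm (b - a)] at this
  nlinarith [mul_le_mul_of_nonneg_left key hba.le]

theorem tendsto_intervalIntegral_of_hasDerivAt_neg {V f : ℝ → ℝ} {c : ℝ} (T : ℝ)
    (hV : ∀ t, 0 ≤ t → HasDerivAt V (-f t) t) (hf : ContinuousOn f (Ici 0))
    (hf0 : ∀ t, 0 ≤ t → 0 ≤ f t) (hc : ∀ t, 0 ≤ t → c ≤ V t) :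
    Tendsto (fun t => ∫ s in t..t + T, f s) atTop (𝓝 0) := by
  have hsub : ∀ a b, 0 ≤ a → 0 ≤ b → ∫ s in a..b, f s = V a - V b := by
    intro a b ha hb
    have hab : uIcc a b ⊆ Ici 0 := fun x hx => le_trans (le_min ha hb) hx.1
    rw [← neg_sub, ← intervalIntegral.integral_eq_sub_of_hasDerivAt (fun x hx => hV x (hab hx))
      (hf.mono hab).intervalIntegrable.neg, intervalIntegral.integral_neg, neg_neg]
  have hanti : Antitone fun t => V (max t 0) := fun a b hab => by
    dsimp only
    have := intervalIntegral.integral_nonneg (μ := volume) (max_le_max hab le_rfl)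
      fun x hx => hf0 x ((le_max_right a 0).trans hx.1)
    linarith [hsub _ _ (le_max_right a 0) (le_max_right b 0)]
  have hVlim : Tendsto V atTop (𝓝 (⨅ t, V (max t 0))) := by
    refine (tendsto_atTop_ciInf hanti ⟨c, ?_⟩).congr' ?_
    · rintro _ ⟨t, rfl⟩
      exact hc _ (le_max_right t 0)
    · filter_upwards [eventually_ge_atTop 0] with t ht
      rw [max_eq_left ht]
  have hdiff := hVlim.sub (hVlim.comp (tendsto_atTop_add_const_right _ T tendsto_id))
  rw [sub_self] at hdiff
  refine hdiff.congr' ?_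
  filter_upwards [eventually_ge_atTop (max 0 (-T))] with t ht
  rw [max_le_iff] at ht
  exact (hsub t (t + T) ht.1 (by linarith)).symm

variable {E : Type*} [NormedAddCommGroup E] [InnerProductSpace ℝ E]

def IsPersistentlyExciting (ψ : ℝ → E) (δ T : ℝ) : Prop :=
  ∀ t, 0 ≤ t → ∀ v, δ * ‖v‖ ^ 2 ≤ ∫ s in t..t + T, ⟪ψ s, v⟫ ^ 2

section GradientFlow

variable {ψ θ : ℝ → E} {G A : E →L[ℝ] E}

theorem continuousOn_inner_of_hasDerivAt (hψ : Continuous ψ)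
    (hθ : ∀ t, 0 ≤ t → HasDerivAt θ (-(⟪ψ t, θ t⟫ • G (ψ t))) t) :
    ContinuousOn (fun t => ⟪ψ t, θ t⟫) (Ici 0) :=
  hψ.continuousOn.inner fun t ht => (hθ t ht).continuousAt.continuousWithinAt

theorem hasDerivAt_half_inner_apply_self {t : ℝ} (hA : (A : E →ₗ[ℝ] E).IsSymmetric)
    (hAG : Function.LeftInverse A G) (hθ : HasDerivAt θ (-(⟪ψ t, θ t⟫ • G (ψ t))) t) :
    HasDerivAt (fun u => ⟪A (θ u), θ u⟫ / 2) (-⟪ψ t, θ t⟫ ^ 2) t := by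
  refine (((A.hasFDerivAt.comp_hasDerivAt t hθ).inner ℝ hθ).div_const 2).congr_deriv ?_
  have hsymm : ⟪A (θ t), G (ψ t)⟫ = ⟪ψ t, θ t⟫ := by
    calc ⟪A (θ t), G (ψ t)⟫ = ⟪θ t, A (G (ψ t))⟫ := hA _ _
      _ = ⟪ψ t, θ t⟫ := by rw [hAG, real_inner_comm]
  simp only [Function.comp_apply, map_neg, map_smul, hAG _, inner_neg_left, inner_neg_right,
    inner_smul_left, inner_smul_right, hsymm, RCLike.conj_to_real]
  ring

theorem norm_sub_sq_le_of_hasDerivAt [CompleteSpace E] {C T t s : ℝ} (hψ : Continuous ψ)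
    (hψC : ∀ t, ‖ψ t‖ ≤ C) (hθ : ∀ t, 0 ≤ t → HasDerivAt θ (-(⟪ψ t, θ t⟫ • G (ψ t))) t)
    (ht : 0 ≤ t) (hs : s ∈ Icc t (t + T)) :
    ‖θ s - θ t‖ ^ 2 ≤ (‖G‖ * C) ^ 2 * T * ∫ u in t..t + T, ⟪ψ u, θ u⟫ ^ 2 := by
  set g := fun u => ⟪ψ u, θ u⟫
  have hg : ContinuousOn g (Ici 0) := continuousOn_inner_of_hasDerivAt hψ hθ
  have hC : 0 ≤ ‖G‖ * C := mul_nonneg (norm_nonneg G) ((norm_nonneg _).trans (hψC 0))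
  have htT : t ≤ t + T := hs.1.trans hs.2
  have hIcc : ∀ b, t ≤ b → uIcc t b ⊆ Ici 0 := fun b hb x hx => ht.trans (by
    rw [uIcc_of_le hb] at hx; exact hx.1)
  have hgT : IntervalIntegrable (fun u => |g u|) volume t (t + T) :=
    (hg.mono (hIcc _ htT)).abs.intervalIntegrable
  have hderiv : ContinuousOn (fun u => -(g u • G (ψ u))) (Ici 0) :=
    (hg.smul (G.continuous.comp hψ).continuousOn).neg
  have hnorm : ‖θ s - θ t‖ ≤ ‖G‖ * C * ∫ u in t..t + T, |g u| := by
    rw [← intervalIntegral.integral_eq_sub_of_hasDerivAt (fun u hu => hθ u (hIcc s hs.1 hu))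
      (hderiv.mono (hIcc s hs.1)).intervalIntegrable, ← intervalIntegral.integral_const_mul]
    calc ‖∫ u in t..s, -(g u • G (ψ u))‖ ≤ ∫ u in t..s, ‖G‖ * C * |g u| := by
          refine intervalIntegral.norm_integral_le_of_norm_le hs.1 (ae_of_all _ fun u _ => ?_)
            ((hg.mono (hIcc s hs.1)).abs.intervalIntegrable.const_mul _)
          rw [norm_neg, norm_smul, Real.norm_eq_abs, mul_comm]
          exact mul_le_mul_of_nonneg_right (G.le_opNorm_of_le (hψC u)) (abs_nonneg _)
      _ ≤ ∫ u in t..t + T, ‖G‖ * C * |g u| :=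
          intervalIntegral.integral_mono_interval le_rfl hs.1 hs.2
            (ae_of_all _ fun u => mul_nonneg hC (abs_nonneg _)) (hgT.const_mul _)
  have hCS := sq_intervalIntegral_le_mul_intervalIntegral_sq htT hgT (by
    simpa only [sq_abs] using ((hg.mono (hIcc _ htT)).fun_pow 2).intervalIntegrable (μ := volume))
  simp only [sq_abs, add_sub_cancel_left] at hCS
  calc ‖θ s - θ t‖ ^ 2 ≤ (‖G‖ * C * ∫ u in t..t + T, |g u|) ^ 2 :=
        pow_le_pow_left₀ (norm_nonneg _) hnorm 2
    _ ≤ (‖G‖ * C) ^ 2 * (T * ∫ u in t..t + T, g u ^ 2) := by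
        rw [mul_pow]; exact mul_le_mul_of_nonneg_left hCS (sq_nonneg _)
    _ = _ := by ring

theorem mul_norm_sq_le_of_isPersistentlyExciting [CompleteSpace E] {C δ T t : ℝ}
    (hψ : Continuous ψ) (hψC : ∀ t, ‖ψ t‖ ≤ C) (hT : 0 ≤ T) (hPE : IsPersistentlyExciting ψ δ T)
    (hθ : ∀ t, 0 ≤ t → HasDerivAt θ (-(⟪ψ t, θ t⟫ • G (ψ t))) t) (ht : 0 ≤ t) :
    δ * ‖θ t‖ ^ 2 ≤
      (2 + 2 * C ^ 2 * (‖G‖ * C) ^ 2 * T ^ 2) * ∫ u in t..t + T, ⟪ψ u, θ u⟫ ^ 2 := by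
  set I := ∫ u in t..t + T, ⟪ψ u, θ u⟫ ^ 2
  have htT : t ≤ t + T := le_add_of_nonneg_right hT
  have hg2 : IntervalIntegrable (fun u => 2 * ⟪ψ u, θ u⟫ ^ 2) volume t (t + T) :=
    (((continuousOn_inner_of_hasDerivAt hψ hθ).mono fun x hx =>
      ht.trans (uIcc_of_le htT ▸ hx).1).fun_pow 2).intervalIntegrable.const_mul 2
  have hpt : ∀ s ∈ Icc t (t + T),
      ⟪ψ s, θ t⟫ ^ 2 ≤ 2 * ⟪ψ s, θ s⟫ ^ 2 + 2 * C ^ 2 * ((‖G‖ * C) ^ 2 * T * I) := by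
    intro s hs
    have hinc : ⟪ψ s, θ s - θ t⟫ ^ 2 ≤ C ^ 2 * ((‖G‖ * C) ^ 2 * T * I) :=
      calc ⟪ψ s, θ s - θ t⟫ ^ 2 ≤ (‖ψ s‖ * ‖θ s - θ t‖) ^ 2 := by
            rw [← sq_abs]
            exact pow_le_pow_left₀ (abs_nonneg _) (abs_real_inner_le_norm _ _) 2
        _ ≤ C ^ 2 * ((‖G‖ * C) ^ 2 * T * I) := by
            rw [mul_pow]
            exact mul_le_mul (pow_le_pow_left₀ (norm_nonneg _) (hψC s) 2)
              (norm_sub_sq_le_of_hasDerivAt hψ hψC hθ ht hs) (sq_nonneg _) (sq_nonneg _)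
    rw [inner_sub_right] at hinc
    nlinarith [sq_nonneg (2 * ⟪ψ s, θ s⟫ - ⟪ψ s, θ t⟫)]
  calc δ * ‖θ t‖ ^ 2 ≤ ∫ s in t..t + T, ⟪ψ s, θ t⟫ ^ 2 := hPE t ht (θ t)
    _ ≤ ∫ s in t..t + T, (2 * ⟪ψ s, θ s⟫ ^ 2 + 2 * C ^ 2 * ((‖G‖ * C) ^ 2 * T * I)) :=
        intervalIntegral.integral_mono_on htT
          (((hψ.inner continuous_const).fun_pow 2).intervalIntegrable _ _)
          (hg2.add intervalIntegrable_const) hpt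
    _ = _ := by
        rw [intervalIntegral.integral_add hg2 intervalIntegrable_const,
          intervalIntegral.integral_const_mul, intervalIntegral.integral_const, smul_eq_mul,
          add_sub_cancel_left]
        ring

theorem tendsto_zero_of_isPersistentlyExciting [CompleteSpace E] {C δ T : ℝ}
    (hA : A.IsPositive) (hAG : Function.LeftInverse A G) (hψ : Continuous ψ)
    (hψC : ∀ t, ‖ψ t‖ ≤ C) (hδ : 0 < δ) (hT : 0 ≤ T) (hPE : IsPersistentlyExciting ψ δ T)
    (hθ : ∀ t, 0 ≤ t → HasDerivAt θ (-(⟪ψ t, θ t⟫ • G (ψ t))) t) :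
    Tendsto θ atTop (𝓝 0) := by
  have hI : Tendsto (fun t => ∫ u in t..t + T, ⟪ψ u, θ u⟫ ^ 2) atTop (𝓝 0) :=
    tendsto_intervalIntegral_of_hasDerivAt_neg T
      (fun t ht => hasDerivAt_half_inner_apply_self hA.isSymmetric hAG (hθ t ht))
      ((continuousOn_inner_of_hasDerivAt hψ hθ).fun_pow 2) (fun t _ => sq_nonneg _)
      (c := 0) fun t _ => div_nonneg (hA.inner_nonneg_left _) zero_le_two
  set K := 2 + 2 * C ^ 2 * (‖G‖ * C) ^ 2 * T ^ 2
  have hsq : Tendsto (fun t => ‖θ t‖ ^ 2) atTop (𝓝 0) := by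
    refine tendsto_of_tendsto_of_tendsto_of_le_of_le' tendsto_const_nhds
      (by simpa using (hI.const_mul K).div_const δ) (Eventually.of_forall fun t => sq_nonneg _) ?_
    filter_upwards [eventually_ge_atTop 0] with t ht
    rw [le_div_iff₀ hδ, mul_comm]
    exact mul_norm_sq_le_of_isPersistentlyExciting hψ hψC hT hPE hθ ht
  simpa [tendsto_zero_iff_norm_tendsto_zero] using hsq.sqrt

end GradientFlow

open scoped ComplexOrder in
theorem Matrix.PosSemidef.isPositive_toEuclideanCLM {𝕜 ι : Type*} [RCLike 𝕜] [Fintype ι]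
    [DecidableEq ι] {M : Matrix ι ι 𝕜} (hM : M.PosSemidef) :
    (toEuclideanCLM (𝕜 := 𝕜) M).IsPositive := by
  rw [← ContinuousLinearMap.isPositive_toLinearMap_iff, coe_toEuclideanCLM_eq_toEuclideanLin,
    isPositive_toEuclideanLin_iff]
  exact hM

theorem Matrix.leftInverse_toEuclideanCLM_inv {𝕜 ι : Type*} [RCLike 𝕜] [Fintype ι]
    [DecidableEq ι] {M : Matrix ι ι 𝕜} (hM : IsUnit M.det) :
    Function.LeftInverse (toEuclideanCLM (𝕜 := 𝕜) M⁻¹) (toEuclideanCLM (𝕜 := 𝕜) M) := by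
  intro x
  ext1
  simp [mulVec_mulVec, nonsing_inv_mul _ hM]

theorem stmt_5_general {n : ℕ}
    (ψ : ℝ → EuclideanSpace ℝ (Fin n))
    (hψcont : Continuous ψ) (hψbdd : ∃ Cψ : ℝ, ∀ t : ℝ, ‖ψ t‖ ≤ Cψ)
    (δ T : ℝ) (hδ : 0 < δ) (hT : 0 < T)
    (hPE : ∀ t : ℝ, 0 ≤ t → ∀ v : EuclideanSpace ℝ (Fin n),
      δ * ‖v‖ ^ 2 ≤ ∫ s in t..(t + T), (∑ i, ψ s i * v i) ^ 2)
    (Γ : Matrix (Fin n) (Fin n) ℝ) (hΓ : Γ.PosDef)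
    (θ : ℝ → EuclideanSpace ℝ (Fin n))
    (hθ : ∀ t : ℝ, 0 ≤ t →
      HasDerivAt θ
        (-(WithLp.toLp 2 (Γ.mulVec ((dotProduct (ψ t).ofLp (θ t).ofLp) • ((ψ t).ofLp : Fin n → ℝ)))) :
          EuclideanSpace ℝ (Fin n)) t) :
    Filter.Tendsto θ Filter.atTop (nhds 0) := by
  obtain ⟨C, hC⟩ := hψbdd
  have hPE' : IsPersistentlyExciting ψ δ T := fun t ht v => by
    simpa only [PiLp.inner_apply, RCLike.inner_apply, conj_trivial, mul_comm] using hPE t ht v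
  refine tendsto_zero_of_isPersistentlyExciting hΓ.inv.posSemidef.isPositive_toEuclideanCLM
    (leftInverse_toEuclideanCLM_inv ((isUnit_iff_isUnit_det Γ).1 hΓ.isUnit)) hψcont hC hδ hT.le
    hPE' fun t ht => ?_
  refine (hθ t ht).congr_deriv ?_
  ext1
  simp [mulVec_smul, EuclideanSpace.inner_eq_star_dotProduct, dotProduct_comm]

/-- Persistency of excitation implies convergence of the gradient estimator.
The Loewner inequality `∫_t^{t+T} ψψᵀ ⪰ δ I` is stated via quadratic forms. -/
theorem stmt_5 {n : ℕ}
    (ψ : ℝ → EuclideanSpace ℝ (Fin n))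
    (hψcont : Continuous ψ) (hψbdd : ∃ Cψ : ℝ, ∀ t : ℝ, ‖ψ t‖ ≤ Cψ)
    (δ T : ℝ) (hδ : 0 < δ) (hT : 0 < T)
    (hPE : ∀ t : ℝ, 0 ≤ t → ∀ v : EuclideanSpace ℝ (Fin n),
      δ * ‖v‖ ^ 2 ≤ ∫ s in t..(t + T), (∑ i, ψ s i * v i) ^ 2)
    (Γ : Matrix (Fin n) (Fin n) ℝ) (hΓ : Γ.PosDef) (hΓsymm : Γ.IsSymm)
    (θ : ℝ → EuclideanSpace ℝ (Fin n))
    (hθ : ∀ t : ℝ, 0 ≤ t →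
      HasDerivAt θ
        (-(WithLp.toLp 2 (Γ.mulVec ((dotProduct (ψ t).ofLp (θ t).ofLp) • ((ψ t).ofLp : Fin n → ℝ)))) :
          EuclideanSpace ℝ (Fin n)) t) :
    Filter.Tendsto θ Filter.atTop (nhds 0) :=
  stmt_5_general ψ hψcont hψbdd δ T hδ hT hPE Γ hΓ θ hθ
end

section
/- Cascade exponential convergence (Lyapunov step of Proposition 7): let A ∈ ℝ^{n×n} be Hurwitz, P symmetric positive definite with P A + Aᵀ P = −ℓ₁ I for some ℓ₁ > 0, and let z : [0,∞) → ℝⁿ be a bounded differentiable curve satisfying ż = A z + d(t), where |d(t)| ≤ ℓ₃ |w(t)| for some ℓ₃ > 0 and w(t) → 0 exponentially (|w(t)| ≤ C e^{−μ t} with μ > 0). Then z(t) → 0 as t → ∞. -/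
open Filter Set Topology Real
open scoped RealInnerProductSpace

/-! Along the curve, `V = ⟪P z, z⟫` satisfies `V' = -ℓ₁ ‖z‖² + 2 ⟪P z, d⟫` by the Lyapunov
identity. Since `V ≤ ‖P‖ ‖z‖²` and `z` is bounded, this gives the scalar differential inequality
`V' ≤ -c V + K e^{-μt}`, whose comparison with the explicit solution forces `V → 0`
exponentially; positive definiteness of `P` gives `m ‖z‖² ≤ V`. -/

section ScalarComparison

variable {V V' : ℝ → ℝ} {c K : ℝ}

theorem le_of_hasDerivAt_le_neg_mul_add_exp {ν : ℝ} (hνc : ν < c)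
    (hV : ∀ t, 0 ≤ t → HasDerivAt V (V' t) t)
    (hV' : ∀ t, 0 ≤ t → V' t ≤ -c * V t + K * exp (-ν * t)) {t : ℝ} (ht : 0 ≤ t) :
    V t ≤ (V 0 - K / (c - ν)) * exp (-c * t) + K / (c - ν) * exp (-ν * t) := by
  -- `R e^{-νt}` solves `W' = -c W + K e^{-νt}`, so `e^{ct} (V - R e^{-νt})` is nonincreasing
  set R := K / (c - ν)
  have hRK : R * (c - ν) = K := div_mul_cancel₀ K (sub_pos.mpr hνc).ne'
  let U : ℝ → ℝ := fun s ↦ exp (c * s) * (V s - R * exp (-ν * s))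
  have hU : ∀ s, 0 ≤ s → HasDerivAt U
      (exp (c * s) * (c * V s + V' s - K * exp (-ν * s))) s := by
    intro s hs
    have hexp (a : ℝ) : HasDerivAt (fun s ↦ exp (a * s)) (exp (a * s) * a) s := by
      simpa using ((hasDerivAt_id s).const_mul a).exp
    refine ((hexp c).mul ((hV s hs).sub ((hexp (-ν)).const_mul R))).congr_deriv ?_
    rw [← hRK]
    simp only [Pi.sub_apply]
    ring
  have hU_anti : AntitoneOn U (Ici 0) := by
    refine antitoneOn_of_hasDerivWithinAt_nonpos (convex_Ici 0)
      (f' := fun s ↦ exp (c * s) * (c * V s + V' s - K * exp (-ν * s)))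
      (fun s hs ↦ (hU s hs).continuousAt.continuousWithinAt) (fun s hs ↦ ?_) (fun s hs ↦ ?_)
    all_goals rw [interior_Ici] at hs
    · exact (hU s hs.le).hasDerivWithinAt
    · exact mul_nonpos_of_nonneg_of_nonpos (exp_pos _).le (by linarith [hV' s hs.le])
  have hUt : U t ≤ U 0 := hU_anti self_mem_Ici ht ht
  simp only [U, mul_zero, exp_zero, one_mul, mul_one] at hUt
  have : V t - R * exp (-ν * t) ≤ (V 0 - R) * exp (-c * t) := by
    rw [show exp (-c * t) = (exp (c * t))⁻¹ by rw [neg_mul, exp_neg], ← div_eq_mul_inv,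
      le_div_iff₀' (exp_pos _)]
    exact hUt
  linarith

theorem tendsto_exp_neg_mul_atTop_nhds_zero {a : ℝ} (ha : 0 < a) :
    Tendsto (fun t ↦ exp (-a * t)) atTop (𝓝 0) :=
  tendsto_exp_comp_nhds_zero.mpr (tendsto_id.const_mul_atTop_of_neg (neg_neg_of_pos ha))

theorem tendsto_zero_of_hasDerivAt_le_neg_mul_add_exp {μ : ℝ} (hc : 0 < c) (hK : 0 ≤ K)
    (hμ : 0 < μ) (hV : ∀ t, 0 ≤ t → HasDerivAt V (V' t) t)
    (hV' : ∀ t, 0 ≤ t → V' t ≤ -c * V t + K * exp (-μ * t)) (hV_nonneg : ∀ t, 0 ≤ t → 0 ≤ V t) :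
    Tendsto V atTop (𝓝 0) := by
  -- slow down the forcing rate below `c`, which avoids the resonant case `μ = c`
  set ν := min μ (c / 2)
  have hν : 0 < ν := lt_min hμ (half_pos hc)
  have hνc : ν < c := (min_le_right _ _).trans_lt (half_lt_self hc)
  have hV'ν : ∀ t, 0 ≤ t → V' t ≤ -c * V t + K * exp (-ν * t) := fun t ht ↦ by
    have : -μ * t ≤ -ν * t := by nlinarith [min_le_left μ (c / 2)]
    grw [hV' t ht, this]
  have hbound : Tendsto (fun t ↦ (V 0 - K / (c - ν)) * exp (-c * t) + K / (c - ν) * exp (-ν * t))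
      atTop (𝓝 0) := by
    simpa using ((tendsto_exp_neg_mul_atTop_nhds_zero hc).const_mul _).add
      ((tendsto_exp_neg_mul_atTop_nhds_zero hν).const_mul _)
  refine tendsto_of_tendsto_of_tendsto_of_le_of_le' tendsto_const_nhds hbound ?_ ?_
  · filter_upwards [eventually_ge_atTop 0] with t ht using hV_nonneg t ht
  · filter_upwards [eventually_ge_atTop 0] with t ht
    exact le_of_hasDerivAt_le_neg_mul_add_exp hνc hV hV'ν ht

end ScalarComparison

section InnerProductSpace

variable {E : Type*} [NormedAddCommGroup E] [InnerProductSpace ℝ E]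

theorem ContinuousLinearMap.exists_pos_mul_norm_sq_le_inner_apply_self [FiniteDimensional ℝ E]
    (T : E →L[ℝ] E) (hT : ∀ x, x ≠ 0 → 0 < ⟪T x, x⟫) :
    ∃ m, 0 < m ∧ ∀ x, m * ‖x‖ ^ 2 ≤ ⟪T x, x⟫ := by
  rcases subsingleton_or_nontrivial E with hE | hE
  · exact ⟨1, one_pos, fun x ↦ by simp [Subsingleton.elim x 0]⟩
  obtain ⟨a, ha, ha_min⟩ := (isCompact_sphere (0 : E) 1).exists_isMinOn
    (NormedSpace.sphere_nonempty.mpr zero_le_one) T.reApplyInnerSelf_continuous.continuousOn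
  have ha0 : a ≠ 0 := ne_zero_of_mem_sphere one_ne_zero ⟨a, ha⟩
  refine ⟨⟪T a, a⟫, hT a ha0, fun x ↦ ?_⟩
  rcases eq_or_ne x 0 with rfl | hx
  · simp
  have hx' : ‖x‖ ≠ 0 := norm_ne_zero_iff.mpr hx
  have hu : ‖x‖⁻¹ • x ∈ Metric.sphere (0 : E) 1 := by
    simp [norm_smul, hx']
  have hscale := T.reApplyInnerSelf_smul (‖x‖⁻¹ • x) (c := ‖x‖)
  simp only [smul_smul, mul_inv_cancel₀ hx', one_smul, norm_norm,
    ContinuousLinearMap.reApplyInnerSelf_apply, RCLike.re_to_real] at hscale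
  have hmin : ⟪T a, a⟫ ≤ ⟪T (‖x‖⁻¹ • x), ‖x‖⁻¹ • x⟫ := by
    simpa [ContinuousLinearMap.reApplyInnerSelf_apply] using ha_min hu
  rw [hscale, mul_comm]
  exact mul_le_mul_of_nonneg_left hmin (sq_nonneg _)

variable [CompleteSpace E] {A P : E →L[ℝ] E}

theorem HasDerivAt.inner_apply_self (hP : IsSelfAdjoint P) {z : ℝ → E} {z' : E} {t : ℝ}
    (hz : HasDerivAt z z' t) :
    HasDerivAt (fun s ↦ ⟪P (z s), z s⟫) (2 * ⟪P (z t), z'⟫) t := by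
  refine ((P.hasFDerivAt.comp_hasDerivAt t hz).inner ℝ hz).congr_deriv ?_
  have hsymm : ⟪P z', z t⟫ = ⟪z', P (z t)⟫ := hP.isSymmetric z' (z t)
  rw [Function.comp_apply, hsymm, real_inner_comm z']
  ring

theorem two_mul_inner_apply_of_lyapunov (hP : IsSelfAdjoint P) {ℓ : ℝ}
    (hLyap : P * A + star A * P = -(ℓ • 1)) (x : E) :
    2 * ⟪P x, A x⟫ = -(ℓ * ‖x‖ ^ 2) := by
  have := congrArg (fun T : E →L[ℝ] E ↦ ⟪T x, x⟫) hLyap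
  simp only [ContinuousLinearMap.star_eq_adjoint, add_apply, mul_apply_eq_comp, neg_apply,
    smul_apply, one_apply_eq_self, inner_add_left, inner_neg_left, real_inner_smul_left,
    ContinuousLinearMap.adjoint_inner_left, real_inner_self_eq_norm_sq] at this
  have hsymm : ⟪P (A x), x⟫ = ⟪P x, A x⟫ := by
    rw [real_inner_comm]; exact (hP.isSymmetric x (A x)).symm
  rw [← this, hsymm, two_mul]

theorem tendsto_zero_of_hasDerivAt_of_lyapunov (hP : IsSelfAdjoint P) {m : ℝ} (hm : 0 < m)
    (hPm : ∀ x, m * ‖x‖ ^ 2 ≤ ⟪P x, x⟫) {ℓ : ℝ} (hℓ : 0 < ℓ)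
    (hLyap : P * A + star A * P = -(ℓ • 1)) {d z : ℝ → E} {D μ : ℝ} (hμ : 0 < μ)
    (hd : ∀ t, 0 ≤ t → ‖d t‖ ≤ D * exp (-μ * t)) (hz_bdd : ∃ Cz, ∀ t, 0 ≤ t → ‖z t‖ ≤ Cz)
    (hz : ∀ t, 0 ≤ t → HasDerivAt z (A (z t) + d t) t) :
    Tendsto z atTop (𝓝 0) := by
  obtain ⟨Cz, hCz⟩ := hz_bdd
  have hD : 0 ≤ D := by simpa using (norm_nonneg _).trans (hd 0 le_rfl)
  have hCz0 : 0 ≤ Cz := (norm_nonneg _).trans (hCz 0 le_rfl)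
  set V : ℝ → ℝ := fun t ↦ ⟪P (z t), z t⟫
  set c := ℓ / (‖P‖ + 1)
  have hc : 0 < c := by positivity
  have hc_mul : c * (‖P‖ + 1) = ℓ := div_mul_cancel₀ ℓ (by positivity)
  have hV : ∀ t, 0 ≤ t → HasDerivAt V (2 * ⟪P (z t), A (z t) + d t⟫) t :=
    fun t ht ↦ (hz t ht).inner_apply_self hP
  have hV' : ∀ t, 0 ≤ t →
      2 * ⟪P (z t), A (z t) + d t⟫ ≤ -c * V t + 2 * ‖P‖ * Cz * D * exp (-μ * t) := by
    intro t ht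
    have hdecay : c * V t ≤ ℓ * ‖z t‖ ^ 2 := by
      have : V t ≤ (‖P‖ + 1) * ‖z t‖ ^ 2 := by
        calc V t ≤ ‖P (z t)‖ * ‖z t‖ := real_inner_le_norm _ _
          _ ≤ ‖P‖ * ‖z t‖ * ‖z t‖ := by gcongr; exact P.le_opNorm _
          _ ≤ (‖P‖ + 1) * ‖z t‖ ^ 2 := by nlinarith [sq_nonneg ‖z t‖]
      calc c * V t ≤ c * ((‖P‖ + 1) * ‖z t‖ ^ 2) := by gcongr
        _ = ℓ * ‖z t‖ ^ 2 := by rw [← mul_assoc, hc_mul]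
    have hforcing : ⟪P (z t), d t⟫ ≤ ‖P‖ * Cz * (D * exp (-μ * t)) :=
      calc ⟪P (z t), d t⟫ ≤ ‖P (z t)‖ * ‖d t‖ := real_inner_le_norm _ _
        _ ≤ ‖P‖ * ‖z t‖ * ‖d t‖ := by gcongr; exact P.le_opNorm _
        _ ≤ ‖P‖ * Cz * (D * exp (-μ * t)) := by gcongr; exacts [hCz t ht, hd t ht]
    rw [inner_add_right, mul_add, two_mul_inner_apply_of_lyapunov hP hLyap]
    linarith
  have hV_lim : Tendsto V atTop (𝓝 0) :=
    tendsto_zero_of_hasDerivAt_le_neg_mul_add_exp hc (by positivity) hμ hV hV'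
      fun t _ ↦ (mul_nonneg hm.le (sq_nonneg _)).trans (hPm (z t))
  have hsq : Tendsto (fun t ↦ ‖z t‖ ^ 2) atTop (𝓝 0) := by
    refine squeeze_zero (fun t ↦ sq_nonneg _) (fun t ↦ (le_div_iff₀' hm).mpr (hPm (z t))) ?_
    simpa using hV_lim.div_const m
  rw [tendsto_zero_iff_norm_tendsto_zero]
  simpa using hsq.sqrt

end InnerProductSpace

theorem stmt_6_general {n : ℕ}
    (A : Matrix (Fin n) (Fin n) ℝ)
    (P : Matrix (Fin n) (Fin n) ℝ) (hP : P.PosDef)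
    (ℓ₁ : ℝ) (hℓ₁ : 0 < ℓ₁) (hLyap : P * A + A.transpose * P = -(ℓ₁ • (1 : Matrix (Fin n) (Fin n) ℝ)))
    {k : ℕ}
    (d : ℝ → EuclideanSpace ℝ (Fin n))
    (w : ℝ → EuclideanSpace ℝ (Fin k))
    (ℓ₃ : ℝ) (hℓ₃ : 0 < ℓ₃) (hdw : ∀ t : ℝ, 0 ≤ t → ‖d t‖ ≤ ℓ₃ * ‖w t‖)
    (C μ : ℝ) (hμ : 0 < μ) (hwexp : ∀ t : ℝ, 0 ≤ t → ‖w t‖ ≤ C * Real.exp (-μ * t))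
    (z : ℝ → EuclideanSpace ℝ (Fin n))
    (hzbdd : ∃ Cz : ℝ, ∀ t : ℝ, 0 ≤ t → ‖z t‖ ≤ Cz)
    (hz : ∀ t : ℝ, 0 ≤ t →
      HasDerivAt z (Matrix.toEuclideanLin A (z t) + d t) t) :
    Filter.Tendsto z Filter.atTop (nhds 0) := by
  set T := Matrix.toEuclideanCLM (n := Fin n) (𝕜 := ℝ)
  have hTP : IsSelfAdjoint (T P) := hP.isHermitian.isSelfAdjoint.map T
  have hTLyap : T P * T A + star (T A) * T P = -(ℓ₁ • 1) := by
    rw [← map_star, Matrix.star_eq_conjTranspose, Matrix.conjTranspose_eq_transpose_of_trivial,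
      ← map_mul, ← map_mul, ← map_add, hLyap, map_neg, map_smul, map_one]
  have hTP_pos : ∀ x, x ≠ 0 → 0 < ⟪T P x, x⟫ := fun x hx ↦ by
    simp only [T]
    rw [real_inner_comm, Matrix.inner_toEuclideanCLM]
    simpa using hP.dotProduct_mulVec_pos (x := x.ofLp) (by simpa using hx)
  obtain ⟨m, hm, hPm⟩ := (T P).exists_pos_mul_norm_sq_le_inner_apply_self hTP_pos
  refine tendsto_zero_of_hasDerivAt_of_lyapunov hTP hm hPm hℓ₁ hTLyap hμ (D := ℓ₃ * C)
    (fun t ht ↦ ?_) hzbdd hz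
  calc ‖d t‖ ≤ ℓ₃ * ‖w t‖ := hdw t ht
    _ ≤ ℓ₃ * (C * exp (-μ * t)) := by gcongr; exact hwexp t ht
    _ = ℓ₃ * C * exp (-μ * t) := by ring

/-- Cascade exponential convergence (Lyapunov step of Proposition 7). -/
theorem stmt_6 {n : ℕ}
    (A : Matrix (Fin n) (Fin n) ℝ)
    (hHurwitz : ∀ z ∈ spectrum ℂ (A.map (Complex.ofReal : ℝ → ℂ)), z.re < 0)
    (P : Matrix (Fin n) (Fin n) ℝ) (hP : P.PosDef) (hPsymm : P.IsSymm)
    (ℓ₁ : ℝ) (hℓ₁ : 0 < ℓ₁) (hLyap : P * A + A.transpose * P = -(ℓ₁ • (1 : Matrix (Fin n) (Fin n) ℝ)))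
    {k : ℕ}
    (d : ℝ → EuclideanSpace ℝ (Fin n)) (hd : Continuous d)
    (w : ℝ → EuclideanSpace ℝ (Fin k)) (hw : Continuous w)
    (ℓ₃ : ℝ) (hℓ₃ : 0 < ℓ₃) (hdw : ∀ t : ℝ, 0 ≤ t → ‖d t‖ ≤ ℓ₃ * ‖w t‖)
    (C μ : ℝ) (hμ : 0 < μ) (hwexp : ∀ t : ℝ, 0 ≤ t → ‖w t‖ ≤ C * Real.exp (-μ * t))
    (z : ℝ → EuclideanSpace ℝ (Fin n))
    (hzbdd : ∃ Cz : ℝ, ∀ t : ℝ, 0 ≤ t → ‖z t‖ ≤ Cz)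
    (hz : ∀ t : ℝ, 0 ≤ t →
      HasDerivAt z (Matrix.toEuclideanLin A (z t) + d t) t) :
    Filter.Tendsto z Filter.atTop (nhds 0) :=
  stmt_6_general A P hP ℓ₁ hℓ₁ hLyap d w ℓ₃ hℓ₃ hdw C μ hμ hwexp z hzbdd hz
end

section
/- Comparison-lemma step: let V : [0,∞) → ℝ be differentiable with V(t) ≥ 0, and suppose V̇(t) ≤ −a V(t) + b(t)√(V(t)) for all t, where a > 0 and b is continuous with b(t) → 0 as t → ∞. Then V(t) → 0 as t → ∞. -/
/-!
By Young's inequality `b √V ≤ (a/2) V + b² / (2a)`, the hypothesis turns into the linear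
differential inequality `V̇ ≤ -(a/2) V + b² / (2a)` whose forcing term tends to `0`. Once the
forcing is below `k ε / 2` from time `s` on, `e^{kt} (V t - ε/2)` is antitone on `[s, ∞)`, so
`V t ≤ ε/2 + e^{-k(t-s)} (V s - ε/2)`, which is eventually below `ε`.
-/

open Real Filter Set Topology

lemma mul_sqrt_le_half_mul_add_sq_div {a x : ℝ} (ha : 0 < a) (hx : 0 ≤ x) (b : ℝ) :
    b * √x ≤ a / 2 * x + b ^ 2 / (2 * a) := by
  have hsq : √x ^ 2 = x := sq_sqrt hx
  have hgap : a / 2 * x + b ^ 2 / (2 * a) - b * √x = (a * √x - b) ^ 2 / (2 * a) := by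
    nth_rw 1 [← hsq]
    field_simp
    ring
  have : 0 ≤ (a * √x - b) ^ 2 / (2 * a) := by positivity
  linarith

lemma le_add_mul_exp_of_hasDerivAt_le {V dV : ℝ → ℝ} (hV : ∀ t, HasDerivAt V (dV t) t)
    {k m s : ℝ} (hineq : ∀ t, s ≤ t → dV t ≤ -k * (V t - m)) {t : ℝ} (hst : s ≤ t) :
    V t ≤ m + (V s - m) * exp (-(k * (t - s))) := by
  set U : ℝ → ℝ := fun t => exp (k * t) * (V t - m)
  have hU : ∀ t, HasDerivAt U (exp (k * t) * (k * (V t - m) + dV t)) t := by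
    intro t
    have hexp : HasDerivAt (fun t => exp (k * t)) (exp (k * t) * k) t := by
      simpa using ((hasDerivAt_id t).const_mul k).exp
    exact (hexp.mul ((hV t).sub_const m)).congr_deriv (by ring)
  have hanti : AntitoneOn U (Ici s) := by
    refine antitoneOn_of_hasDerivWithinAt_nonpos (convex_Ici s)
      (fun t _ => (hU t).continuousAt.continuousWithinAt) (fun t _ => (hU t).hasDerivWithinAt)
      fun t ht => ?_
    rw [interior_Ici] at ht
    have := hineq t ht.le
    exact mul_nonpos_of_nonneg_of_nonpos (exp_pos _).le (by linarith)
  have hUst : exp (k * t) * (V t - m) ≤ exp (k * s) * (V s - m) :=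
    hanti self_mem_Ici hst hst
  have hsplit : exp (k * s) = exp (k * t) * exp (-(k * (t - s))) := by
    rw [← exp_add]; ring_nf
  rw [hsplit, mul_assoc] at hUst
  have := le_of_mul_le_mul_left hUst (exp_pos _)
  linarith

lemma tendsto_zero_of_hasDerivAt_le_neg_mul_add {V dV c : ℝ → ℝ} (hV0 : ∀ t, 0 ≤ V t)
    (hV : ∀ t, HasDerivAt V (dV t) t) {k : ℝ} (hk : 0 < k) (hc : Tendsto c atTop (𝓝 0))
    (hineq : ∀ t, dV t ≤ -k * V t + c t) :
    Tendsto V atTop (𝓝 0) := by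
  refine tendsto_order.2 ⟨fun l hl => Eventually.of_forall fun t => hl.trans_le (hV0 t),
    fun ε hε => ?_⟩
  obtain ⟨s, hs⟩ :=
    eventually_atTop.1 (hc.eventually (gt_mem_nhds (by positivity : 0 < k * ε / 2)))
  have hbound : ∀ t, s ≤ t → V t ≤ ε / 2 + (V s - ε / 2) * exp (-(k * (t - s))) :=
    fun t hst => le_add_mul_exp_of_hasDerivAt_le hV
      (fun t ht => by linarith [hineq t, hs t ht]) hst
  have hdecay : Tendsto (fun t => ε / 2 + (V s - ε / 2) * exp (-(k * (t - s)))) atTop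
      (𝓝 (ε / 2)) := by
    have : Tendsto (fun t => k * (t - s)) atTop atTop :=
      (tendsto_atTop_add_const_right _ (-s) tendsto_id).const_mul_atTop hk
    simpa using ((tendsto_exp_neg_atTop_nhds_zero.comp this).const_mul (V s - ε / 2)).const_add
      (ε / 2)
  filter_upwards [eventually_ge_atTop s,
    hdecay.eventually (gt_mem_nhds (by linarith : ε / 2 < ε))]
    with t hst hlt using (hbound t hst).trans_lt hlt

theorem stmt_14_general (V : ℝ → ℝ) (hVnonneg : ∀ t : ℝ, 0 ≤ V t)
    (dV : ℝ → ℝ) (hV : ∀ t : ℝ, HasDerivAt V (dV t) t)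
    (a : ℝ) (ha : 0 < a)
    (b : ℝ → ℝ) (hb0 : Filter.Tendsto b Filter.atTop (nhds 0))
    (hineq : ∀ t : ℝ, dV t ≤ -a * V t + b t * Real.sqrt (V t)) :
    Filter.Tendsto V Filter.atTop (nhds 0) := by
  have hforcing : Tendsto (fun t => b t ^ 2 / (2 * a)) atTop (𝓝 0) := by
    simpa using (hb0.pow 2).div_const (2 * a)
  refine tendsto_zero_of_hasDerivAt_le_neg_mul_add hVnonneg hV (half_pos ha) hforcing fun t => ?_
  linarith [hineq t, mul_sqrt_le_half_mul_add_sq_div ha (hVnonneg t) (b t)]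

/-- Comparison-lemma step: `V̇ ≤ -aV + b(t)√V` with `b(t) → 0` forces `V(t) → 0`. -/
theorem stmt_14 (V : ℝ → ℝ) (hVnonneg : ∀ t : ℝ, 0 ≤ V t)
    (dV : ℝ → ℝ) (hV : ∀ t : ℝ, HasDerivAt V (dV t) t)
    (a : ℝ) (ha : 0 < a)
    (b : ℝ → ℝ) (hb : Continuous b) (hb0 : Filter.Tendsto b Filter.atTop (nhds 0))
    (hineq : ∀ t : ℝ, dV t ≤ -a * V t + b t * Real.sqrt (V t)) :
    Filter.Tendsto V Filter.atTop (nhds 0) :=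
  stmt_14_general V hVnonneg dV hV a ha b hb0 hineq
end
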